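/- The set of well-approximated irrational numbers is dense in ℝ. -/

import Mathlib

open Filter Topology

/-- Iterates of the Gauss map starting at `θ`. -/
noncomputable def gaussIter (θ : ℝ) : ℕ → ℝ
  | 0 => θ
  | k + 1 => (Int.fract (gaussIter θ k))⁻¹

/-- The `k`-th partial quotient (digit) of the continued fraction of `θ`. -/
noncomputable def cfA (θ : ℝ) (k : ℕ) : ℤ := ⌊gaussIter θ k⌋

/-- Numerators of the continued fraction convergents of `θ`. -/
noncomputable def cfP (θ : ℝ) : ℕ → ℤ
  | 0 => cfA θ 0
  | 1 => cfA θ 1 * cfA θ 0 + 1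
  | k + 2 => cfA θ (k + 2) * cfP θ (k + 1) + cfP θ k

/-- Denominators of the continued fraction convergents of `θ`. -/
noncomputable def cfQ (θ : ℝ) : ℕ → ℤ
  | 0 => 1
  | 1 => cfA θ 1
  | k + 2 => cfA θ (k + 2) * cfQ θ (k + 1) + cfQ θ k

/-- An irrational number `θ` is *well-approximated* if there is an increasing sequence
`k n` of natural numbers such that for every constant `C > 0`,
`exp (C * q (k n)) / q (k n + 1) → 0` as `n → ∞`. -/
def WellApproximated (θ : ℝ) : Prop :=
  Irrational θ ∧ ∃ k : ℕ → ℕ, StrictMono k ∧ ∀ C : ℝ, 0 < C →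
    Tendsto (fun n => Real.exp (C * (cfQ θ (k n) : ℝ)) / (cfQ θ (k n + 1) : ℝ))
      atTop (𝓝 0)

/-!
Keep the first `L + 2` partial quotients of an irrational `y` and continue with digits
`a (k + 1) = ⌈exp ((k + 1) * q k)⌉`. The resulting continued fraction `θ` is irrational and
well-approximated along the whole sequence of indices. Both `y` and `θ` are images
`(p (L + 1) * t + p L) / (q (L + 1) * t + q L)` of tails `t > 1` under the same unimodular map, so
`|y - θ| ≤ 2 / q (L + 1) ^ 2 ≤ 2 / (L + 1) ^ 2`. Hence every irrational, and so every real, is a limit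
of well-approximated numbers.
-/

namespace DigitSeq

def num (c : ℕ → ℤ) : ℕ → ℤ
  | 0 => c 0
  | 1 => c 1 * c 0 + 1
  | k + 2 => c (k + 2) * num c (k + 1) + num c k

def den (c : ℕ → ℤ) : ℕ → ℤ
  | 0 => 1
  | 1 => c 1
  | k + 2 => c (k + 2) * den c (k + 1) + den c k

def IsAdmissible (c : ℕ → ℤ) : Prop := ∀ k, 1 ≤ c (k + 1)

def shift (c : ℕ → ℤ) (m : ℕ) : ℕ → ℤ := fun j => c (j + m)

variable {c : ℕ → ℤ}

theorem IsAdmissible.shift (h : IsAdmissible c) (m : ℕ) : IsAdmissible (shift c m) := fun k => by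
  simpa only [DigitSeq.shift, Nat.add_right_comm k 1 m] using h (k + m)

theorem shift_shift_one (c : ℕ → ℤ) (m : ℕ) : shift (shift c m) 1 = shift c (m + 1) := by
  funext j
  simp only [shift, Nat.add_comm m 1, Nat.add_assoc]

theorem one_le_den (h : IsAdmissible c) (n : ℕ) : 1 ≤ den c n := by
  induction n using Nat.twoStepInduction with
  | zero => rfl
  | one => exact h 0
  | more n ih₀ ih₁ =>
    simp only [den]
    nlinarith [h (n + 1)]

theorem natCast_le_den (h : IsAdmissible c) (n : ℕ) : (n : ℤ) ≤ den c n := by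
  induction n using Nat.twoStepInduction with
  | zero => exact zero_le_one
  | one => exact h 0
  | more n _ ih =>
    have : den c (n + 1) ≤ c (n + 2) * den c (n + 1) :=
      le_mul_of_one_le_left (by linarith [one_le_den h (n + 1)]) (h (n + 1))
    simp only [den]
    push_cast at ih ⊢
    linarith [one_le_den h n]

theorem le_den_succ (h : IsAdmissible c) (k : ℕ) : c (k + 1) ≤ den c (k + 1) := by
  cases k with
  | zero => exact le_rfl
  | succ k =>
    simp only [den]
    nlinarith [h (k + 1), one_le_den h (k + 1), one_le_den h k]

theorem den_le_num (h0 : 1 ≤ c 0) (h : IsAdmissible c) (n : ℕ) : den c n ≤ num c n := by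
  induction n using Nat.twoStepInduction with
  | zero => exact h0
  | one =>
    simp only [num, den]
    nlinarith [h 0]
  | more n ih₀ ih₁ =>
    simp only [num, den]
    nlinarith [h (n + 1)]

theorem num_succ_mul_den_sub_num_mul_den_succ (c : ℕ → ℤ) (n : ℕ) :
    num c (n + 1) * den c n - num c n * den c (n + 1) = (-1) ^ n := by
  induction n with
  | zero => simp only [num, den]; ring
  | succ n ih =>
    cases n with
    | zero => simp only [num, den]; ring
    | succ n =>
      simp only [num, den] at ih ⊢
      linear_combination -ih

theorem num_den_congr {c' : ℕ → ℤ} {n : ℕ} (h : ∀ k ≤ n, c k = c' k) :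
    num c n = num c' n ∧ den c n = den c' n := by
  induction n using Nat.twoStepInduction with
  | zero => simp [num, den, h 0 le_rfl]
  | one => simp [num, den, h 0 (by omega), h 1 le_rfl]
  | more n ih₀ ih₁ =>
    obtain ⟨hp₀, hq₀⟩ := ih₀ fun k hk => h k (by omega)
    obtain ⟨hp₁, hq₁⟩ := ih₁ fun k hk => h k (by omega)
    simp only [num, den, h (n + 2) le_rfl, hp₀, hq₀, hp₁, hq₁, and_self]

theorem den_succ_eq_num_shift (c : ℕ → ℤ) (n : ℕ) : den c (n + 1) = num (shift c 1) n := by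
  induction n using Nat.twoStepInduction with
  | zero => rfl
  | one => rfl
  | more n ih₀ ih₁ =>
    simp only [den, num, ← ih₀, ← ih₁]
    rfl

theorem num_succ_eq_num_shift (c : ℕ → ℤ) (n : ℕ) :
    num c (n + 1) = c 0 * num (shift c 1) n + den (shift c 1) n := by
  induction n using Nat.twoStepInduction with
  | zero => simp only [num, den, shift]; ring
  | one => simp only [num, den, shift]; ring
  | more n ih₀ ih₁ =>
    rw [num, ih₀, ih₁, num, den]
    simp only [shift]
    ring


noncomputable def conv (c : ℕ → ℤ) (n : ℕ) : ℝ := num c n / den c n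

theorem dist_conv_succ_le (h : IsAdmissible c) (n : ℕ) :
    dist (conv c n) (conv c (n + 1)) ≤ 2 / ((n + 1 : ℕ) : ℝ) ^ 2 := by
  have hq₀ : (1 : ℝ) ≤ den c n := by exact_mod_cast one_le_den h n
  have hn₀ : (n : ℝ) ≤ den c n := by exact_mod_cast natCast_le_den h n
  have hn₁ : ((n + 1 : ℕ) : ℝ) ≤ den c (n + 1) := by exact_mod_cast natCast_le_den h (n + 1)
  have hq₁ : (0 : ℝ) < den c (n + 1) := by exact_mod_cast one_le_den h (n + 1)
  have hdet : |(num c n * den c (n + 1) - den c n * num c (n + 1) : ℝ)| = 1 := by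
    rw [← abs_neg, neg_sub, mul_comm (den c n : ℝ)]
    exact_mod_cast (num_succ_mul_den_sub_num_mul_den_succ c n).symm ▸ abs_neg_one_pow n
  have hden : ((n + 1 : ℕ) : ℝ) ^ 2 ≤ 2 * (den c n * den c (n + 1)) := by
    push_cast at hn₁ ⊢
    nlinarith
  rw [Real.dist_eq, conv, conv, div_sub_div _ _ (by positivity) (by positivity), abs_div, hdet,
    abs_of_pos (by positivity), div_le_div_iff₀ (by positivity) (by positivity)]
  linarith

theorem cauchySeq_conv (h : IsAdmissible c) : CauchySeq (conv c) := by
  refine cauchySeq_of_dist_le_of_summable _ (dist_conv_succ_le h) ?_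
  have := (summable_nat_add_iff 1).2 (Real.summable_one_div_nat_pow.2 one_lt_two)
  simpa only [mul_one_div] using this.mul_left 2

theorem conv_succ (h : IsAdmissible c) (n : ℕ) :
    conv c (n + 1) = c 0 + (conv (shift c 1) n)⁻¹ := by
  have hp : (0 : ℝ) < num (shift c 1) n := by
    exact_mod_cast (one_le_den (h.shift 1) n).trans (den_le_num (h 0) (h.shift 1) n)
  have hq : (0 : ℝ) < den (shift c 1) n := by exact_mod_cast one_le_den (h.shift 1) n
  rw [conv, conv, num_succ_eq_num_shift, den_succ_eq_num_shift, inv_div]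
  push_cast
  field_simp

noncomputable def value (c : ℕ → ℤ) : ℝ := limUnder atTop (conv c)

theorem tendsto_conv_value (h : IsAdmissible c) : Tendsto (conv c) atTop (𝓝 (value c)) :=
  (cauchySeq_conv h).tendsto_limUnder

theorem one_le_value (h0 : 1 ≤ c 0) (h : IsAdmissible c) : 1 ≤ value c := by
  refine ge_of_tendsto (tendsto_conv_value h) (Eventually.of_forall fun n => ?_)
  have hq : (1 : ℝ) ≤ den c n := by exact_mod_cast one_le_den h n
  rw [conv, one_le_div (by positivity)]
  exact_mod_cast den_le_num h0 h n

theorem value_eq_add_inv (h : IsAdmissible c) : value c = c 0 + (value (shift c 1))⁻¹ := by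
  have hval : (1 : ℝ) ≤ value (shift c 1) := one_le_value (h 0) (h.shift 1)
  refine tendsto_nhds_unique ((tendsto_conv_value h).comp (tendsto_add_atTop_nat 1)) ?_
  simp only [Function.comp_def, conv_succ h]
  exact tendsto_const_nhds.add ((tendsto_conv_value (h.shift 1)).inv₀ (by positivity))

theorem one_lt_value_shift_one (h : IsAdmissible c) : 1 < value (shift c 1) := by
  have hval : (1 : ℝ) ≤ value (shift (shift c 1) 1) := one_le_value ((h.shift 1) 0) (h.shift 2)
  have h1 : (1 : ℝ) ≤ shift c 1 0 := by exact_mod_cast h 0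
  rw [value_eq_add_inv (h.shift 1)]
  have : 0 < (value (shift (shift c 1) 1))⁻¹ := by positivity
  linarith

theorem floor_value (h : IsAdmissible c) : ⌊value c⌋ = c 0 := by
  have hval := one_lt_value_shift_one h
  rw [Int.floor_eq_iff, value_eq_add_inv h]
  constructor
  · linarith [inv_pos.2 (zero_lt_one.trans hval)]
  · linarith [inv_lt_one_of_one_lt₀ hval]

theorem fract_value (h : IsAdmissible c) : Int.fract (value c) = (value (shift c 1))⁻¹ := by
  rw [Int.fract, floor_value h, value_eq_add_inv h, add_sub_cancel_left]

theorem gaussIter_value (h : IsAdmissible c) (k : ℕ) : gaussIter (value c) k = value (shift c k) := by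
  induction k with
  | zero => rfl
  | succ k ih => rw [gaussIter, ih, fract_value (h.shift k), inv_inv, shift_shift_one]

theorem cfA_value (h : IsAdmissible c) : cfA (value c) = c := by
  funext k
  rw [cfA, gaussIter_value h, floor_value (h.shift k)]
  simp only [shift, zero_add]

end DigitSeq

open DigitSeq

theorem irrational_of_fract_gaussIter_ne_zero {x : ℝ} (h : ∀ k, Int.fract (gaussIter x k) ≠ 0) :
    Irrational x := by
  have hstream : ∀ n, GenContFract.IntFractPair.stream x n = some (.of (gaussIter x n)) := by
    intro n
    induction n with
    | zero => rfl
    | succ n ih => exact GenContFract.IntFractPair.stream_succ_of_some ih (h n)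
  rintro ⟨q, rfl⟩
  obtain ⟨n, hn⟩ := (GenContFract.terminates_iff_rat (q : ℝ)).2 ⟨q, rfl⟩
  have := GenContFract.of_terminatedAt_n_iff_succ_nth_intFractPair_stream_eq_none.1 hn
  simp [hstream] at this

theorem irrational_gaussIter {x : ℝ} (hx : Irrational x) (k : ℕ) : Irrational (gaussIter x k) := by
  induction k with
  | zero => exact hx
  | succ k ih => exact (ih.sub_intCast _).inv

theorem one_lt_gaussIter_succ {x : ℝ} (hx : Irrational x) (k : ℕ) : 1 < gaussIter x (k + 1) := by
  have hpos : 0 < Int.fract (gaussIter x k) :=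
    Int.fract_pos.2 ((irrational_gaussIter hx k).ne_int _)
  exact one_lt_inv₀ hpos |>.2 (Int.fract_lt_one _)

theorem gaussIter_eq_cfA_add_inv (x : ℝ) (k : ℕ) :
    gaussIter x k = cfA x k + (gaussIter x (k + 1))⁻¹ := by
  rw [gaussIter, inv_inv, cfA, Int.floor_add_fract]

theorem isAdmissible_cfA {x : ℝ} (hx : Irrational x) : IsAdmissible (cfA x) := fun k =>
  Int.le_floor.2 (by exact_mod_cast (one_lt_gaussIter_succ hx k).le)

theorem cfQ_eq_den (θ : ℝ) : cfQ θ = den (cfA θ) := by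
  funext n
  induction n using Nat.twoStepInduction with
  | zero => rfl
  | one => rfl
  | more n ih₀ ih₁ => rw [cfQ, den, ih₀, ih₁]

theorem DigitSeq.irrational_value {c : ℕ → ℤ} (h : IsAdmissible c) : Irrational (value c) := by
  refine irrational_of_fract_gaussIter_ne_zero fun k => ?_
  rw [gaussIter_value h, fract_value (h.shift k)]
  exact inv_ne_zero (zero_lt_one.trans (one_lt_value_shift_one (h.shift k))).ne'

theorem DigitSeq.mul_den_add_den_eq_num_add_num {c : ℕ → ℤ} {t : ℕ → ℝ}
    (ht : ∀ k, t k = c k + (t (k + 1))⁻¹) (ht₀ : ∀ k, t (k + 1) ≠ 0) (n : ℕ) :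
    t 0 * (den c (n + 1) * t (n + 2) + den c n) = num c (n + 1) * t (n + 2) + num c n := by
  have hstep : ∀ k, t k * t (k + 1) = c k * t (k + 1) + 1 := fun k => by
    rw [ht k, add_mul, inv_mul_cancel₀ (ht₀ k)]
  induction n with
  | zero =>
    simp only [num, den]
    push_cast
    linear_combination t 2 * hstep 0 - (t 0 - c 0) * hstep 1
  | succ n ih =>
    simp only [num, den]
    push_cast
    linear_combination t (n + 3) * ih - (t 0 * den c (n + 1) - num c (n + 1)) * hstep (n + 2)

theorem abs_div_sub_div_le {p p' q q' s t : ℝ} (hdet : |p * q' - p' * q| = 1) (hq : 0 < q)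
    (hq' : 0 ≤ q') (hs : 1 ≤ s) (ht : 1 ≤ t) :
    |(p * s + p') / (q * s + q') - (p * t + p') / (q * t + q')| ≤ 2 / q ^ 2 := by
  have hqs : 0 < q * s := by positivity
  have hqt : 0 < q * t := by positivity
  calc |(p * s + p') / (q * s + q') - (p * t + p') / (q * t + q')|
      = |s - t| / ((q * s + q') * (q * t + q')) := by
        rw [div_sub_div _ _ (by positivity) (by positivity), abs_div,
          abs_of_pos (by positivity : 0 < (q * s + q') * (q * t + q')),
          show (p * s + p') * (q * t + q') - (q * s + q') * (p * t + p') =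
            (p * q' - p' * q) * (s - t) by ring, abs_mul, hdet, one_mul]
    _ ≤ (s + t) / ((q * s) * (q * t)) := by
        gcongr
        · exact abs_sub_le_iff.2 ⟨by linarith, by linarith⟩
        · linarith
        · linarith
    _ = (s⁻¹ + t⁻¹) / q ^ 2 := by field_simp; ring
    _ ≤ 2 / q ^ 2 := by
        gcongr
        linarith [inv_le_one_of_one_le₀ hs, inv_le_one_of_one_le₀ ht]

theorem Irrational.eq_div_of_cfA {x : ℝ} (hx : Irrational x) (n : ℕ) :
    x = (num (cfA x) (n + 1) * gaussIter x (n + 2) + num (cfA x) n) /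
      (den (cfA x) (n + 1) * gaussIter x (n + 2) + den (cfA x) n) := by
  have hden : (0 : ℝ) < den (cfA x) (n + 1) * gaussIter x (n + 2) + den (cfA x) n := by
    have h₁ : (1 : ℝ) ≤ den (cfA x) (n + 1) := by exact_mod_cast one_le_den (isAdmissible_cfA hx) _
    have h₀ : (1 : ℝ) ≤ den (cfA x) n := by exact_mod_cast one_le_den (isAdmissible_cfA hx) _
    nlinarith [one_lt_gaussIter_succ hx (n + 1)]
  rw [eq_div_iff hden.ne']
  exact mul_den_add_den_eq_num_add_num (gaussIter_eq_cfA_add_inv x)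
    (fun k => (zero_lt_one.trans (one_lt_gaussIter_succ hx k)).ne') n

theorem abs_sub_le_of_cfA_eq {x y : ℝ} (hx : Irrational x) (hy : Irrational y) {n : ℕ}
    (h : ∀ k ≤ n + 1, cfA x k = cfA y k) : |x - y| ≤ 2 / (den (cfA x) (n + 1) : ℝ) ^ 2 := by
  obtain ⟨hp₁, hq₁⟩ := num_den_congr h
  obtain ⟨hp₀, hq₀⟩ := num_den_congr (n := n) fun k hk => h k (by omega)
  have hdet : |(num (cfA x) (n + 1) * den (cfA x) n - num (cfA x) n * den (cfA x) (n + 1) : ℝ)|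
      = 1 := by
    exact_mod_cast (num_succ_mul_den_sub_num_mul_den_succ (cfA x) n).symm ▸ abs_neg_one_pow n
  conv_lhs => rw [hx.eq_div_of_cfA n, hy.eq_div_of_cfA n, ← hp₁, ← hq₁, ← hp₀, ← hq₀]
  exact abs_div_sub_div_le hdet
    (by exact_mod_cast one_le_den (isAdmissible_cfA hx) _)
    (by exact_mod_cast (zero_le_one.trans (one_le_den (isAdmissible_cfA hx) n)))
    (one_lt_gaussIter_succ hx _).le (one_lt_gaussIter_succ hy _).le

theorem wellApproximated_of_exp_le_cfQ_succ {θ : ℝ} (hθ : Irrational θ)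
    (h : ∀ᶠ k : ℕ in atTop, Real.exp ((k + 1) * cfQ θ k) ≤ cfQ θ (k + 1)) :
    WellApproximated θ := by
  refine ⟨hθ, id, strictMono_id, fun C _ => ?_⟩
  have hbound : Tendsto (fun k : ℕ => Real.exp (C - (k + 1))) atTop (𝓝 0) :=
    Real.tendsto_exp_atBot.comp <| tendsto_atBot_add_const_left _ C <|
      tendsto_neg_atTop_atBot.comp <| tendsto_atTop_add_const_right _ 1 tendsto_natCast_atTop_atTop
  refine squeeze_zero' (Eventually.of_forall fun k => ?_) ?_ hbound
  · have : (0 : ℝ) < cfQ θ (k + 1) := by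
      rw [cfQ_eq_den]; exact_mod_cast one_le_den (isAdmissible_cfA hθ) _
    positivity
  filter_upwards [h, eventually_ge_atTop ⌈C⌉₊] with k hk hCk
  have hq : (1 : ℝ) ≤ cfQ θ k := by rw [cfQ_eq_den]; exact_mod_cast one_le_den (isAdmissible_cfA hθ) k
  have hC : C ≤ k + 1 := by linarith [(Nat.ceil_le.1 hCk : C ≤ k)]
  calc Real.exp (C * cfQ θ k) / cfQ θ (k + 1)
      ≤ Real.exp (C * cfQ θ k) / Real.exp ((k + 1) * cfQ θ k) := by gcongr
    _ = Real.exp ((C - (k + 1)) * cfQ θ k) := by rw [← Real.exp_sub, sub_mul]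
    _ ≤ Real.exp (C - (k + 1)) := by
        gcongr
        nlinarith

namespace DigitSeq

/-- `extendState b M k = (a k, den a k, den a (k - 1))` for `a = extend b M`: the digits of `b` are
kept up to index `M`, after which `a (k + 1) = ⌈exp ((k + 1) * den a k)⌉`. -/
noncomputable def extendState (b : ℕ → ℤ) (M : ℕ) : ℕ → ℤ × ℤ × ℤ
  | 0 => (b 0, 1, 0)
  | k + 1 =>
    let s := extendState b M k
    let d := if k + 1 ≤ M then b (k + 1) else ⌈Real.exp ((k + 1) * s.2.1)⌉
    (d, d * s.2.1 + s.2.2, s.2.1)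

noncomputable def extend (b : ℕ → ℤ) (M : ℕ) (k : ℕ) : ℤ := (extendState b M k).1

variable {b : ℕ → ℤ}

theorem extend_of_le {M k : ℕ} (hk : k ≤ M) : extend b M k = b k := by
  cases k with
  | zero => rfl
  | succ k => exact if_pos hk

theorem den_extend (M k : ℕ) : den (extend b M) k = (extendState b M k).2.1 := by
  induction k using Nat.twoStepInduction with
  | zero => rfl
  | one => exact (mul_one _).symm.trans (add_zero _).symm
  | more k ih₀ ih₁ => rw [den, ih₀, ih₁]; rfl

theorem exp_le_extend_succ {M k : ℕ} (hk : M ≤ k) :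
    Real.exp ((k + 1) * den (extend b M) k) ≤ extend b M (k + 1) := by
  rw [den_extend, extend, extendState, if_neg (by omega)]
  exact Int.le_ceil _

theorem IsAdmissible.extend (hb : IsAdmissible b) (M : ℕ) : IsAdmissible (extend b M) := by
  intro k
  by_cases hk : k + 1 ≤ M
  · rw [extend_of_le hk]; exact hb k
  · rw [DigitSeq.extend, extendState, if_neg hk]
    exact Int.ceil_pos.2 (Real.exp_pos _)

theorem wellApproximated_value_extend (hb : IsAdmissible b) (M : ℕ) :
    WellApproximated (value (extend b M)) := by
  have ha := hb.extend M
  refine wellApproximated_of_exp_le_cfQ_succ (irrational_value ha) ?_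
  filter_upwards [eventually_ge_atTop M] with k hk
  rw [cfQ_eq_den, cfA_value ha]
  exact (exp_le_extend_succ hk).trans (by exact_mod_cast le_den_succ ha k)

end DigitSeq

theorem exists_wellApproximated_abs_sub_lt {y ε : ℝ} (hy : Irrational y) (hε : 0 < ε) :
    ∃ θ, WellApproximated θ ∧ |y - θ| < ε := by
  obtain ⟨L, hL⟩ := exists_nat_gt (2 / ε)
  have hb := isAdmissible_cfA hy
  set θ := value (extend (cfA y) (L + 1))
  have hθ : Irrational θ := irrational_value (hb.extend _)
  have hclose : |y - θ| ≤ 2 / (den (cfA y) (L + 1) : ℝ) ^ 2 :=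
    abs_sub_le_of_cfA_eq hy hθ fun k hk => by rw [cfA_value (hb.extend _), extend_of_le hk]
  have hden : (L + 1 : ℝ) ≤ den (cfA y) (L + 1) := by exact_mod_cast natCast_le_den hb (L + 1)
  refine ⟨θ, wellApproximated_value_extend hb _, hclose.trans_lt ?_⟩
  calc 2 / (den (cfA y) (L + 1) : ℝ) ^ 2 ≤ 2 / (L + 1) := by
        gcongr
        nlinarith
    _ < ε := by
        rw [div_lt_iff₀ (by positivity)]
        rw [div_lt_iff₀ hε] at hL
        linarith

/-- The set of well-approximated irrational numbers is dense in `ℝ`. -/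
theorem wellApproximated_dense : Dense {θ : ℝ | WellApproximated θ} := by
  refine Dense.of_closure (dense_irrational.mono fun y hy => Metric.mem_closure_iff.2 fun ε hε => ?_)
  obtain ⟨θ, hθ, hyθ⟩ := exists_wellApproximated_abs_sub_lt hy hε
  exact ⟨θ, hθ, by rwa [Real.dist_eq]⟩
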